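/- Let f⁰ ∈ (ℝ³)^n be the vertices of an n-gon, and let f¹ = A(n)f⁰ (applying A(n) coordinatewise to the n-tuple of points in ℝ³). Then the 'solution energy' ‖f¹ - Tf¹‖² satisfies ‖f¹ - Tf¹‖² ≤ λ_1(n)² ‖f⁰ - Tf⁰‖², where λ_1(n) = 1/(1+4sin²(π/n)). -/

import Mathlib

open Matrix Real Finset

/-- The cyclic shift permutation matrix: `T eᵢ = e_{i+1}`. -/
def shiftMat (n : ℕ) [NeZero n] : Matrix (Fin n) (Fin n) ℝ :=
  Matrix.of fun i j => if j = i + 1 then 1 else 0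

/-- The matrix `B(n) = 3 Iₙ - T - Tᵗ`. -/
def Bmat (n : ℕ) [NeZero n] : Matrix (Fin n) (Fin n) ℝ :=
  (3 : ℝ) • (1 : Matrix (Fin n) (Fin n) ℝ) - shiftMat n - (shiftMat n)ᵀ

/-- `A(n) = B(n)⁻¹`. -/
noncomputable def Amat (n : ℕ) [NeZero n] : Matrix (Fin n) (Fin n) ℝ := (Bmat n)⁻¹

/-- `λ₁(n) = 1/(1 + 4 sin²(π/n))`. -/
noncomputable def lam1 (n : ℕ) : ℝ := 1 / (1 + 4 * Real.sin (Real.pi / n) ^ 2)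


/-- Componentwise action of an `n × n` matrix on an `n`-tuple of points of `ℝ³`. -/
noncomputable def applyMat {n : ℕ} (M : Matrix (Fin n) (Fin n) ℝ)
    (g : Fin n → EuclideanSpace ℝ (Fin 3)) : Fin n → EuclideanSpace ℝ (Fin 3) :=
  fun i => ∑ j, M i j • g j

/-- The cyclic shift acting on `n`-tuples of points of `ℝ³`. -/
def shiftTup {n : ℕ} [NeZero n] (g : Fin n → EuclideanSpace ℝ (Fin 3)) :
    Fin n → EuclideanSpace ℝ (Fin 3) := fun i => g (i + 1)

/-- `‖g‖² = Σᵢ |gᵢ|²`. -/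
noncomputable def sqE {n : ℕ} (g : Fin n → EuclideanSpace ℝ (Fin 3)) : ℝ :=
  ∑ i, ‖g i‖ ^ 2

/-! Since `A(n)` commutes with the shift, `f¹ - Tf¹ = A(n) (f⁰ - Tf⁰)`, and each coordinate of
`w = f⁰ - Tf⁰` sums to zero. Hence so does each coordinate of `v = A(n) w`, and for such `v` the
discrete Wirtinger inequality `‖v - Tv‖² ≥ 4 sin²(π/n) ‖v‖²` (Parseval for the discrete Fourier
transform on `ZMod n`, which diagonalises `T` with eigenvalues `e^{2πik/n}`) gives
`⟪v, w⟫ = ⟪v, B(n) v⟫ = ‖v‖² + ‖v - Tv‖² ≥ λ₁(n)⁻¹ ‖v‖²`. Cauchy–Schwarz then yields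
`‖v‖ ≤ λ₁(n) ‖w‖`. -/

lemma Real.sin_pi_div_le_sin_pi_mul_div {N m : ℕ} (h1 : 1 ≤ m) (h2 : m < N) :
    Real.sin (π / N) ≤ Real.sin (π * m / N) := by
  have hmN : (m : ℝ) + 1 ≤ N := by exact_mod_cast h2
  have hm1 : (1 : ℝ) ≤ m := by exact_mod_cast h1
  have hN : (0 : ℝ) < N := by linarith
  have hpiN : 0 ≤ π / N ∧ π / N ≤ π :=
    ⟨by positivity, div_le_self pi_pos.le (by linarith)⟩
  have hmem : π * m / N ∈ Set.Icc (π / N) (π - π / N) := by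
    constructor
    · gcongr; nlinarith [pi_pos]
    · rw [le_sub_iff_add_le, ← add_div, div_le_iff₀ hN]; nlinarith [pi_pos]
  have := strictConcaveOn_sin_Icc.concaveOn.min_le_of_mem_Icc hpiN ⟨by linarith, by linarith⟩ hmem
  rwa [Real.sin_pi_sub, min_self] at this

section Wirtinger

open ZMod Complex ComplexConjugate

variable {N : ℕ} [NeZero N]

lemma ZMod.sum_normSq_dft (Φ : ZMod N → ℂ) :
    ∑ k, normSq (dft Φ k) = N * ∑ j, normSq (Φ j) := by
  have orth (t : ZMod N) : ∑ k, stdAddChar (k * t) = if t = 0 then (N : ℂ) else 0 := by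
    rw [AddChar.sum_mulShift t (isPrimitive_stdAddChar N), ZMod.card]
    push_cast; rfl
  suffices h : ∑ k, dft Φ k * conj (dft Φ k) = N * ∑ j, Φ j * conj (Φ j) by
    simp only [mul_conj] at h
    exact_mod_cast h
  calc ∑ k, dft Φ k * conj (dft Φ k)
      = ∑ k, ∑ j, ∑ l, Φ j * conj (Φ l) * stdAddChar (k * (l - j)) := by
        refine sum_congr rfl fun k _ => ?_
        simp only [dft_apply, smul_eq_mul, map_sum, map_mul, ← AddChar.map_neg_eq_conj,
          neg_neg, sum_mul_sum]
        refine sum_congr rfl fun j _ => sum_congr rfl fun l _ => ?_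
        rw [show k * (l - j) = -(j * k) + l * k by ring, AddChar.map_add_eq_mul]
        ring
    _ = ∑ j, ∑ l, Φ j * conj (Φ l) * ∑ k, stdAddChar (k * (l - j)) := by
        rw [sum_comm]
        simp only [mul_sum]
        exact sum_congr rfl fun j _ => sum_comm
    _ = N * ∑ j, Φ j * conj (Φ j) := by
        simp only [orth, sub_eq_zero, mul_ite, mul_zero, sum_ite_eq', mem_univ, if_true, mul_sum]
        exact sum_congr rfl fun j _ => mul_comm _ _

lemma ZMod.dft_sub_comp_add_one (Φ : ZMod N → ℂ) (k : ZMod N) :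
    dft (fun j => Φ j - Φ (j + 1)) k = (1 - stdAddChar k) * dft Φ k := by
  have shift : ∑ j, stdAddChar (-(j * k)) * Φ (j + 1) = stdAddChar k * dft Φ k := by
    rw [dft_apply, mul_sum]
    refine Fintype.sum_equiv (Equiv.addRight 1) _ _ fun j => ?_
    rw [Equiv.coe_addRight, smul_eq_mul, ← mul_assoc, ← AddChar.map_add_eq_mul]
    ring_nf
  simp only [dft_apply, smul_eq_mul, mul_sub, sum_sub_distrib] at shift ⊢
  rw [shift]
  ring

lemma ZMod.normSq_one_sub_stdAddChar (k : ZMod N) :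
    normSq (1 - stdAddChar k) = 4 * Real.sin (π * k.val / N) ^ 2 := by
  have h : stdAddChar k = exp (I * (2 * π * k.val / N : ℝ)) := by
    rw [stdAddChar_apply, toCircle_apply]
    push_cast
    ring_nf
  rw [normSq_eq_norm_sq, norm_sub_rev, h, norm_exp_I_mul_ofReal_sub_one, norm_mul,
    Real.norm_eq_abs, Real.norm_eq_abs, mul_pow, sq_abs, sq_abs]
  ring_nf

theorem ZMod.sin_sq_mul_sum_normSq_le (Φ : ZMod N → ℂ) (hΦ : ∑ j, Φ j = 0) :
    4 * Real.sin (π / N) ^ 2 * ∑ j, normSq (Φ j) ≤ ∑ j, normSq (Φ j - Φ (j + 1)) := by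
  have hN : (0 : ℝ) < N := Nat.cast_pos.2 (NeZero.pos N)
  have hsin : 0 ≤ Real.sin (π / N) := Real.sin_nonneg_of_nonneg_of_le_pi (by positivity)
    (div_le_self pi_pos.le (by exact_mod_cast NeZero.one_le))
  have hterm (k : ZMod N) : 4 * Real.sin (π / N) ^ 2 * normSq (dft Φ k) ≤
      normSq (dft (fun j => Φ j - Φ (j + 1)) k) := by
    rw [dft_sub_comp_add_one, normSq_mul, normSq_one_sub_stdAddChar]
    rcases eq_or_ne k 0 with rfl | hk
    · simp [dft_apply_zero, hΦ]
    · have hval : 1 ≤ k.val := Nat.one_le_iff_ne_zero.2 ((val_ne_zero k).2 hk)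
      gcongr
      · exact normSq_nonneg _
      · exact Real.sin_pi_div_le_sin_pi_mul_div hval (val_lt k)
  have := sum_le_sum fun k (_ : k ∈ univ) => hterm k
  rw [← mul_sum, sum_normSq_dft, sum_normSq_dft, mul_left_comm] at this
  exact le_of_mul_le_mul_left this hN

end Wirtinger

theorem Fin.sin_sq_mul_sum_sq_le {n : ℕ} [NeZero n] (v : Fin n → ℝ) (hv : ∑ i, v i = 0) :
    4 * Real.sin (π / n) ^ 2 * ∑ i, v i ^ 2 ≤ ∑ i, (v i - v (i + 1)) ^ 2 := by
  let e := (ZMod.finEquiv n).symm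
  have reindex (f : Fin n → ℝ) : ∑ j, f (e j) = ∑ i, f i :=
    Fintype.sum_bijective e e.bijective _ _ fun _ => rfl
  have key := ZMod.sin_sq_mul_sum_normSq_le (fun j => (v (e j) : ℂ))
    (by rw [← Complex.ofReal_sum, reindex v, hv, Complex.ofReal_zero])
  simp only [← Complex.ofReal_sub, Complex.normSq_ofReal, ← sq, map_add, map_one] at key
  rwa [reindex (v · ^ 2), reindex fun i => (v i - v (i + 1)) ^ 2] at key

section CyclicMatrices

variable {n : ℕ} [NeZero n]

lemma Bmat_mulVec_apply (v : Fin n → ℝ) (i : Fin n) :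
    (Bmat n *ᵥ v) i = 3 * v i - v (i + 1) - v (i - 1) := by
  have hT : shiftMat n *ᵥ v = fun i => v (i + 1) := by
    ext i; simp [shiftMat, mulVec, dotProduct]
  have hTt : (shiftMat n)ᵀ *ᵥ v = fun i => v (i - 1) := by
    ext i; simp [shiftMat, mulVec, dotProduct, ← sub_eq_iff_eq_add]
  simp [Bmat, sub_mulVec, smul_mulVec, hT, hTt]

lemma Bmat_isHermitian : (Bmat n).IsHermitian := by
  rw [IsHermitian, conjTranspose_eq_transpose_of_trivial, Bmat, transpose_sub, transpose_sub,
    transpose_smul, transpose_one, transpose_transpose, sub_right_comm]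

lemma Fin.sum_comp_add_one (f : Fin n → ℝ) : ∑ i, f (i + 1) = ∑ i, f i :=
  Fintype.sum_equiv (Equiv.addRight 1) _ _ fun _ => rfl

lemma dotProduct_Bmat_mulVec (v : Fin n → ℝ) :
    v ⬝ᵥ Bmat n *ᵥ v = ∑ i, v i ^ 2 + ∑ i, (v i - v (i + 1)) ^ 2 := by
  have hsq : ∑ i, v (i + 1) ^ 2 = ∑ i, v i ^ 2 := Fin.sum_comp_add_one (v · ^ 2)
  have hcross : ∑ i, v (i + 1) * v (i + 1 - 1) = ∑ i, v i * v (i - 1) :=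
    Fin.sum_comp_add_one (fun i => v i * v (i - 1))
  simp only [add_sub_cancel_right] at hcross
  calc v ⬝ᵥ Bmat n *ᵥ v = ∑ i, v i * (3 * v i - v (i + 1) - v (i - 1)) := by
        simp only [dotProduct, Bmat_mulVec_apply]
    _ = ∑ i, (v i ^ 2 + (v i - v (i + 1)) ^ 2) + (∑ i, v (i + 1) * v i - ∑ i, v i * v (i - 1))
          + (∑ i, v i ^ 2 - ∑ i, v (i + 1) ^ 2) := by
        simp only [← sum_sub_distrib, ← sum_add_distrib]
        exact sum_congr rfl fun i _ => by ring
    _ = ∑ i, v i ^ 2 + ∑ i, (v i - v (i + 1)) ^ 2 := by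
        rw [hsq, hcross, sub_self, sub_self, add_zero, add_zero, sum_add_distrib]

lemma Bmat_posDef : (Bmat n).PosDef := by
  refine .of_dotProduct_mulVec_pos Bmat_isHermitian fun v hv => ?_
  rw [star_trivial, dotProduct_Bmat_mulVec]
  obtain ⟨i, hi⟩ := Function.ne_iff.1 hv
  have : 0 < ∑ i, v i ^ 2 := sum_pos' (fun j _ => sq_nonneg _) ⟨i, mem_univ _, sq_pos_of_ne_zero hi⟩
  positivity

lemma sum_Bmat_mulVec (v : Fin n → ℝ) : ∑ i, (Bmat n *ᵥ v) i = ∑ i, v i := by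
  have hsub := Fin.sum_comp_add_one (fun i => v (i - 1))
  simp only [add_sub_cancel_right] at hsub
  simp only [Bmat_mulVec_apply, sum_sub_distrib, ← mul_sum, Fin.sum_comp_add_one, ← hsub]
  ring

lemma Bmat_mulVec_comp_add_one (v : Fin n → ℝ) :
    Bmat n *ᵥ (fun i => v (i + 1)) = fun i => (Bmat n *ᵥ v) (i + 1) := by
  ext i
  simp only [Bmat_mulVec_apply, sub_add_cancel, add_sub_cancel_right]

lemma isUnit_det_Bmat : IsUnit (Bmat n).det :=
  (isUnit_iff_isUnit_det _).1 Bmat_posDef.isUnit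

lemma Bmat_mulVec_Amat_mulVec (w : Fin n → ℝ) : Bmat n *ᵥ (Amat n *ᵥ w) = w := by
  rw [mulVec_mulVec, Amat, mul_nonsing_inv _ isUnit_det_Bmat, one_mulVec]

lemma Amat_mulVec_Bmat_mulVec (v : Fin n → ℝ) : Amat n *ᵥ (Bmat n *ᵥ v) = v := by
  rw [mulVec_mulVec, Amat, nonsing_inv_mul _ isUnit_det_Bmat, one_mulVec]

lemma Amat_mulVec_sub_comp_add_one (x : Fin n → ℝ) :
    Amat n *ᵥ (fun i => x i - x (i + 1)) = fun i => (Amat n *ᵥ x) i - (Amat n *ᵥ x) (i + 1) := by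
  set u := Amat n *ᵥ x
  have hBu : Bmat n *ᵥ (fun i => u i - u (i + 1)) = fun i => x i - x (i + 1) := by
    change Bmat n *ᵥ (u - fun i => u (i + 1)) = _
    rw [mulVec_sub, Bmat_mulVec_comp_add_one, Bmat_mulVec_Amat_mulVec]
    rfl
  rw [← hBu, Amat_mulVec_Bmat_mulVec]

theorem sum_sq_Amat_mulVec_le (w : Fin n → ℝ) (hw : ∑ i, w i = 0) :
    ∑ i, (Amat n *ᵥ w) i ^ 2 ≤ lam1 n ^ 2 * ∑ i, w i ^ 2 := by
  set v := Amat n *ᵥ w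
  set μ := 1 + 4 * Real.sin (π / n) ^ 2
  have hBv : Bmat n *ᵥ v = w := Bmat_mulVec_Amat_mulVec w
  have hv : ∑ i, v i = 0 := by rw [← sum_Bmat_mulVec, hBv, hw]
  have hX : 0 ≤ ∑ i, v i ^ 2 := sum_nonneg fun i _ => sq_nonneg _
  have hquad : μ * ∑ i, v i ^ 2 ≤ v ⬝ᵥ w := by
    rw [← hBv, dotProduct_Bmat_mulVec]
    linarith [Fin.sin_sq_mul_sum_sq_le v hv]
  have hCS : (v ⬝ᵥ w) ^ 2 ≤ (∑ i, v i ^ 2) * ∑ i, w i ^ 2 := sum_mul_sq_le_sq_mul_sq _ _ _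
  rw [lam1, div_pow, one_pow, one_div, inv_mul_eq_div, le_div_iff₀ (by positivity)]
  rcases hX.eq_or_lt with hX0 | hXpos
  · rw [← hX0, zero_mul]
    exact sum_nonneg fun i _ => sq_nonneg _
  · refine le_of_mul_le_mul_left ?_ hXpos
    calc (∑ i, v i ^ 2) * ((∑ i, v i ^ 2) * μ ^ 2) = (μ * ∑ i, v i ^ 2) ^ 2 := by ring
      _ ≤ (v ⬝ᵥ w) ^ 2 := pow_le_pow_left₀ (by positivity) hquad 2
      _ ≤ (∑ i, v i ^ 2) * ∑ i, w i ^ 2 := hCS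

theorem sum_sq_sub_comp_add_one_Amat_mulVec_le (x : Fin n → ℝ) :
    ∑ i, ((Amat n *ᵥ x) i - (Amat n *ᵥ x) (i + 1)) ^ 2 ≤
      lam1 n ^ 2 * ∑ i, (x i - x (i + 1)) ^ 2 := by
  have hsum : ∑ i, (x i - x (i + 1)) = 0 := by
    rw [sum_sub_distrib, Fin.sum_comp_add_one, sub_self]
  simpa only [Amat_mulVec_sub_comp_add_one] using sum_sq_Amat_mulVec_le _ hsum

end CyclicMatrices

lemma sqE_eq_sum_sum_sq {n : ℕ} (g : Fin n → EuclideanSpace ℝ (Fin 3)) :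
    sqE g = ∑ c, ∑ i, g i c ^ 2 := by
  simp only [sqE, EuclideanSpace.norm_sq_eq, Real.norm_eq_abs, sq_abs]
  exact sum_comm

lemma applyMat_apply_apply {n : ℕ} (M : Matrix (Fin n) (Fin n) ℝ)
    (g : Fin n → EuclideanSpace ℝ (Fin 3)) (i : Fin n) (c : Fin 3) :
    applyMat M g i c = (M *ᵥ fun j => g j c) i := by
  simp [applyMat, mulVec, dotProduct]

theorem stmt6_general (n : ℕ) [NeZero n] (f0 : Fin n → EuclideanSpace ℝ (Fin 3)) :
    sqE (applyMat (Amat n) f0 - shiftTup (applyMat (Amat n) f0)) ≤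
      lam1 n ^ 2 * sqE (f0 - shiftTup f0) := by
  calc sqE (applyMat (Amat n) f0 - shiftTup (applyMat (Amat n) f0))
      = ∑ c, ∑ i, ((Amat n *ᵥ fun j => f0 j c) i - (Amat n *ᵥ fun j => f0 j c) (i + 1)) ^ 2 := by
        simp [sqE_eq_sum_sum_sq, shiftTup, applyMat_apply_apply]
    _ ≤ ∑ c, lam1 n ^ 2 * ∑ i, (f0 i c - f0 (i + 1) c) ^ 2 :=
        sum_le_sum fun c _ => sum_sq_sub_comp_add_one_Amat_mulVec_le _
    _ = lam1 n ^ 2 * sqE (f0 - shiftTup f0) := by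
        simp [sqE_eq_sum_sum_sq, shiftTup, mul_sum]

theorem stmt6 (n : ℕ) [NeZero n] (hn : 3 ≤ n) (f0 : Fin n → EuclideanSpace ℝ (Fin 3)) :
    sqE (applyMat (Amat n) f0 - shiftTup (applyMat (Amat n) f0)) ≤
      lam1 n ^ 2 * sqE (f0 - shiftTup f0) :=
  stmt6_general n f0
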